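/- arXiv:2403.17129 — 2 statements merged into one kernel-verified Lean document; each statement's English description precedes it below -/
import Mathlib

section
/- The restrained domination number of the Petersen graph is exactly 4; in particular, the Petersen graph is a cubic graph of order 10 attaining equality in the bound γ_r(G) ≤ (2/5)·|V(G)| for cubic graphs. -/
/-- `S` is a restrained dominating set of `G`: every vertex not in `S` has a
neighbor in `S` (domination) and also a neighbor not in `S` (restraint). -/
def IsRestrainedDomSet {V : Type*} (G : SimpleGraph V) (S : Set V) : Prop :=
  (∀ v ∉ S, ∃ u ∈ S, G.Adj v u) ∧ (∀ v ∉ S, ∃ u ∉ S, G.Adj v u)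

/-- The restrained domination number of a finite graph: the minimum cardinality
of a restrained dominating set. -/
noncomputable def restrainedDominationNumber {V : Type*} [Fintype V] (G : SimpleGraph V) : ℕ :=
  sInf {n : ℕ | ∃ S : Set V, IsRestrainedDomSet G S ∧ S.ncard = n}

/-- The Petersen graph, realized as the Kneser graph `K(5,2)`: vertices are the
2-element subsets of a 5-element set, adjacent iff disjoint. -/
def petersenGraph : SimpleGraph {s : Finset (Fin 5) // s.card = 2} where
  Adj a b := Disjoint a.1 b.1
  symm := ⟨fun _ _ h => h.symm⟩
  loopless := ⟨by
    intro a h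
    have h0 : a.1 = ∅ := by simpa using disjoint_self.mp h
    have h2 := a.2
    rw [h0] at h2
    simp at h2⟩


/-!
The four pairs through the point `0` form a restrained dominating set of `K(5,2)`: any other
pair `{i, j} ⊆ {1, 2, 3, 4}` is disjoint from `{0, k}` for `k ∉ {i, j}`, and from the
complementary pair `{1, 2, 3, 4} \ {i, j}`, which also avoids `0`. Conversely no set of at most
three vertices is restrained dominating; this is a finite check over the triples of vertices.
-/

theorem Finset.exists_eq_insert_insert_singleton_of_card_le_three {α : Type*} [DecidableEq α]
    {s : Finset α} (hs : s.Nonempty) (h3 : s.card ≤ 3) : ∃ a b c, s = {a, b, c} := by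
  have hpos := hs.card_pos
  obtain h | h | h : s.card = 1 ∨ s.card = 2 ∨ s.card = 3 := by omega
  · obtain ⟨a, rfl⟩ := Finset.card_eq_one.mp h
    exact ⟨a, a, a, by simp⟩
  · obtain ⟨a, b, -, rfl⟩ := Finset.card_eq_two.mp h
    exact ⟨a, b, b, by simp⟩
  · obtain ⟨a, b, c, -, -, -, rfl⟩ := Finset.card_eq_three.mp h
    exact ⟨a, b, c, rfl⟩

namespace IsRestrainedDomSet

variable {V : Type*} {G : SimpleGraph V}

theorem univ (G : SimpleGraph V) : IsRestrainedDomSet G Set.univ :=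
  ⟨fun _ hv => absurd trivial hv, fun _ hv => absurd trivial hv⟩

theorem nonempty [Nonempty V] {S : Set V} (hS : IsRestrainedDomSet G S) : S.Nonempty := by
  obtain ⟨v⟩ := ‹Nonempty V›
  by_cases hv : v ∈ S
  · exact ⟨v, hv⟩
  · obtain ⟨u, hu, -⟩ := hS.1 v hv
    exact ⟨u, hu⟩

instance [Fintype V] [DecidableEq V] [DecidableRel G.Adj] (S : Finset V) :
    Decidable (IsRestrainedDomSet G S) := by
  unfold IsRestrainedDomSet
  infer_instance

end IsRestrainedDomSet

section RestrainedDominationNumber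

variable {V : Type*} [Fintype V] (G : SimpleGraph V)

theorem restrainedDominationNumber_le_ncard {S : Set V} (hS : IsRestrainedDomSet G S) :
    restrainedDominationNumber G ≤ S.ncard :=
  Nat.sInf_le ⟨S, hS, rfl⟩

theorem le_restrainedDominationNumber {k : ℕ}
    (h : ∀ S : Finset V, IsRestrainedDomSet G S → k ≤ S.card) :
    k ≤ restrainedDominationNumber G := by
  refine le_csInf ⟨_, Set.univ, IsRestrainedDomSet.univ G, rfl⟩ ?_
  rintro _ ⟨S, hS, rfl⟩
  rw [← S.toFinite.coe_toFinset, Set.ncard_coe_finset]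
  exact h _ (by rwa [S.toFinite.coe_toFinset])

end RestrainedDominationNumber

abbrev PetersenVertex := {s : Finset (Fin 5) // s.card = 2}

instance : Nonempty PetersenVertex := ⟨⟨{0, 1}, rfl⟩⟩

instance : DecidableRel petersenGraph.Adj :=
  fun a b => decidable_of_iff (Disjoint a.1 b.1) Iff.rfl

theorem card_petersenVertex : Fintype.card PetersenVertex = 10 := by
  rw [Fintype.card_subtype, Finset.univ_filter_card_eq, Finset.card_powersetCard, Finset.card_univ,
    Fintype.card_fin]
  rfl

theorem petersenGraph_degree (v : PetersenVertex) : petersenGraph.degree v = 3 := by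
  revert v
  decide

theorem petersenGraph_isRestrainedDomSet_pairs_through_zero :
    IsRestrainedDomSet petersenGraph
      (({⟨{0, 1}, rfl⟩, ⟨{0, 2}, rfl⟩, ⟨{0, 3}, rfl⟩, ⟨{0, 4}, rfl⟩} : Finset PetersenVertex) :
        Set PetersenVertex) := by
  decide

theorem petersenGraph_not_isRestrainedDomSet_triple (a b c : PetersenVertex) :
    ¬ IsRestrainedDomSet petersenGraph
      (({a, b, c} : Finset PetersenVertex) : Set PetersenVertex) := by
  revert a b c
  decide

theorem four_le_card_of_petersenGraph_isRestrainedDomSet {S : Finset PetersenVertex}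
    (hS : IsRestrainedDomSet petersenGraph S) : 4 ≤ S.card := by
  by_contra! h
  obtain ⟨a, b, c, rfl⟩ :=
    S.exists_eq_insert_insert_singleton_of_card_le_three (Finset.coe_nonempty.mp hS.nonempty)
      (by omega)
  exact petersenGraph_not_isRestrainedDomSet_triple a b c hS

theorem restrainedDominationNumber_petersenGraph : restrainedDominationNumber petersenGraph = 4 :=
  le_antisymm
    ((restrainedDominationNumber_le_ncard _
      petersenGraph_isRestrainedDomSet_pairs_through_zero).trans (by rw [Set.ncard_coe_finset]; rfl))
    (le_restrainedDominationNumber _ fun _ => four_le_card_of_petersenGraph_isRestrainedDomSet)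

/-- The Petersen graph has restrained domination number exactly `4`; it is a
cubic graph of order `10` attaining equality in `γ_r(G) ≤ (2/5)·|V(G)|`. -/
theorem restrainedDominationNumber_petersen :
    restrainedDominationNumber petersenGraph = 4 ∧
    Fintype.card {s : Finset (Fin 5) // s.card = 2} = 10 ∧
    (∀ v, (petersenGraph.neighborSet v).ncard = 3) ∧
    (restrainedDominationNumber petersenGraph : ℝ) =
      (2 / 5) * Fintype.card {s : Finset (Fin 5) // s.card = 2} := by
  refine ⟨restrainedDominationNumber_petersenGraph, card_petersenVertex, fun v => ?_, ?_⟩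
  · rw [Set.ncard_eq_toFinset_card', ← SimpleGraph.neighborFinset_def,
      SimpleGraph.card_neighborFinset_eq_degree, petersenGraph_degree]
  · rw [restrainedDominationNumber_petersenGraph, card_petersenVertex]
    norm_num
end

section
/- Let G be a finite simple graph in which every vertex has degree 2 or degree 3, and suppose G is bipartite with partite sets the set S of degree-2 vertices and the set L of degree-3 vertices (i.e., every edge of G joins a vertex of degree 2 to a vertex of degree 3). Then γ_r(G) ≤ |L|, the number of degree-3 vertices of G. -/
/-!
Write `L` and `S` for the vertices of degree 3 and 2; counting edges gives `3|L| = 2|S|`.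
Choose `A ⊆ L` maximal with pairwise disjoint neighbourhoods. Each of the `3|A|` vertices of
`N(A)` has exactly one neighbour in `L \ A`, and by maximality every `l ∈ L \ A` has
`c_l ≥ 1` of them. Let `E` consist of `min 2 c_l` of these for every `l`. Then `A ∪ (S \ E)`
is restrained dominating: a vertex of `E` sees `A` and a vertex of `L \ A`, and each
`l ∈ L \ A` sees `E` and, having at most two neighbours in `E`, also `S \ E`.
Since `c_l + 1 ≤ 2 min 2 c_l`, we get `2|E| ≥ 3|A| + |L \ A|`, hence `|A| + |S| - |E| ≤ |L|`.
-/

open Finset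

theorem restrainedDominationNumber_le_ncard_s3 {V : Type*} [Fintype V] {G : SimpleGraph V}
    {D : Set V} (hD : IsRestrainedDomSet G D) : restrainedDominationNumber G ≤ D.ncard :=
  Nat.sInf_le ⟨D, hD, rfl⟩

theorem isRestrainedDomSet_union_sdiff {V : Type*} [DecidableEq V] {G : SimpleGraph V}
    {A S E : Finset V} (hAS : Disjoint A S) (hES : E ⊆ S)
    (hE : ∀ s ∈ E, (∃ a ∈ A, G.Adj s a) ∧ ∃ l ∉ S, l ∉ A ∧ G.Adj s l)
    (hout : ∀ l ∉ S, l ∉ A → (∃ s ∈ E, G.Adj l s) ∧ ∃ s ∈ S \ E, G.Adj l s) :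
    IsRestrainedDomSet G ↑(A ∪ (S \ E)) := by
  constructor
  all_goals
    intro v hv
    simp only [coe_union, coe_sdiff, Set.mem_union, Set.mem_sdiff, mem_coe, not_or,
      not_and_not_right] at hv ⊢
  · by_cases hvS : v ∈ S
    · obtain ⟨a, haA, hva⟩ := (hE v (hv.2 hvS)).1
      exact ⟨a, Or.inl haA, hva⟩
    · obtain ⟨s, hs, hvs⟩ := (hout v hvS hv.1).2
      exact ⟨s, Or.inr (mem_sdiff.1 hs), hvs⟩
  · by_cases hvS : v ∈ S
    · obtain ⟨l, hlS, hlA, hvl⟩ := (hE v (hv.2 hvS)).2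
      exact ⟨l, ⟨hlA, fun h => absurd h hlS⟩, hvl⟩
    · obtain ⟨s, hsE, hvs⟩ := (hout v hvS hv.1).1
      exact ⟨s, ⟨fun hsA => disjoint_left.1 hAS hsA (hES hsE), fun _ => hsE⟩, hvs⟩

theorem Finset.exists_maximal_pairwiseDisjoint {ι α : Type*} (s : Finset ι) (f : ι → Finset α) :
    ∃ t ⊆ s, (t : Set ι).PairwiseDisjoint f ∧ ∀ i ∈ s, i ∉ t → ∃ j ∈ t, ¬Disjoint (f i) (f j) := by
  classical
  set packings := {t ∈ s.powerset | ((t : Finset ι) : Set ι).PairwiseDisjoint f}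
  obtain ⟨t, ht, hmax⟩ := packings.exists_max_image card ⟨∅, by simp [packings]⟩
  rw [mem_filter, mem_powerset] at ht
  refine ⟨t, ht.1, ht.2, fun i hi hit => ?_⟩
  by_contra! hdisj
  have hins : insert i t ∈ packings := by
    rw [mem_filter, mem_powerset, coe_insert]
    exact ⟨insert_subset hi ht.1, ht.2.insert fun j hj _ => hdisj j hj⟩
  have := hmax _ hins
  rw [card_insert_of_notMem hit] at this
  omega

theorem Finset.exists_subset_card_le_two_lt_two_mul_card {α : Type*} {s : Finset α}
    (hs : s.Nonempty) (h3 : #s ≤ 3) : ∃ t ⊆ s, #t ≤ 2 ∧ #s < 2 * #t := by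
  obtain ⟨t, hts, ht⟩ := exists_subset_card_eq (min_le_right 2 #s)
  have := hs.card_pos
  exact ⟨t, hts, by omega, by omega⟩

namespace SimpleGraph

variable {V : Type*} {G : SimpleGraph V}

theorem ncard_neighborSet_eq_degree (v : V) [Fintype (G.neighborSet v)] :
    (G.neighborSet v).ncard = G.degree v := by
  rw [Set.ncard_eq_toFinset_card', ← card_neighborSet_eq_degree, Set.toFinset_card]

theorem eq_of_adj_of_degree_le_two {s a x y : V} [Fintype (G.neighborSet s)]
    (hs : G.degree s ≤ 2) (ha : G.Adj s a) (hx : G.Adj s x) (hy : G.Adj s y)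
    (hxa : x ≠ a) (hya : y ≠ a) : x = y := by
  by_contra hxy
  have : 2 < G.degree s := two_lt_card_iff.2
    ⟨a, x, y, by simpa, by simpa, by simpa, hxa.symm, hya.symm, hxy⟩
  omega

section Finite

variable [Fintype V] [DecidableRel G.Adj]

variable (G) in
def verticesOfDegree (k : ℕ) : Finset V := {v | G.degree v = k}

@[simp]
theorem mem_verticesOfDegree {k : ℕ} {v : V} : v ∈ G.verticesOfDegree k ↔ G.degree v = k := by
  simp [verticesOfDegree]

@[simp]
theorem coe_verticesOfDegree (k : ℕ) :
    (G.verticesOfDegree k : Set V) = {v | G.degree v = k} := by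
  ext; simp

theorem disjoint_verticesOfDegree {j k : ℕ} (h : j ≠ k) :
    Disjoint (G.verticesOfDegree j) (G.verticesOfDegree k) :=
  Finset.disjoint_left.2 fun _ hj hk =>
    h ((mem_verticesOfDegree.1 hj).symm.trans (mem_verticesOfDegree.1 hk))

variable (G) in
structure IsTwoThreeBiregular : Prop where
  degree_eq_two_or_three (v : V) : G.degree v = 2 ∨ G.degree v = 3
  degree_ne_of_adj ⦃u v : V⦄ : G.Adj u v → G.degree u ≠ G.degree v

namespace IsTwoThreeBiregular

theorem degree_eq_two_of_adj (hG : G.IsTwoThreeBiregular) {u v : V} (h : G.Adj u v)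
    (hu : G.degree u = 3) : G.degree v = 2 := by
  have := hG.degree_ne_of_adj h
  rcases hG.degree_eq_two_or_three v with hv | hv <;> omega

theorem degree_eq_three_of_adj (hG : G.IsTwoThreeBiregular) {u v : V} (h : G.Adj u v)
    (hu : G.degree u = 2) : G.degree v = 3 := by
  have := hG.degree_ne_of_adj h
  rcases hG.degree_eq_two_or_three v with hv | hv <;> omega

theorem card_verticesOfDegree_mul_eq (hG : G.IsTwoThreeBiregular) :
    #(G.verticesOfDegree 3) * 3 = #(G.verticesOfDegree 2) * 2 := by
  refine card_mul_eq_card_mul G.Adj (fun l hl => ?_) fun s hs => ?_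
  · rw [mem_verticesOfDegree] at hl
    rw [← hl, ← card_neighborFinset_eq_degree]
    congr 1
    ext s
    simpa using fun h => hG.degree_eq_two_of_adj h hl
  · rw [mem_verticesOfDegree] at hs
    rw [← hs, ← card_neighborFinset_eq_degree]
    congr 1
    ext l
    simpa [adj_comm] using fun h => hG.degree_eq_three_of_adj h hs

end IsTwoThreeBiregular

variable [DecidableEq V]

variable (G) in
def neighborFinsetOf (A : Finset V) : Finset V := A.biUnion (G.neighborFinset ·)

theorem mem_neighborFinsetOf {A : Finset V} {s : V} :
    s ∈ G.neighborFinsetOf A ↔ ∃ a ∈ A, G.Adj a s := by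
  simp [neighborFinsetOf]

theorem card_neighborFinsetOf {A : Finset V} {k : ℕ}
    (hA : (A : Set V).PairwiseDisjoint (G.neighborFinset ·)) (hdeg : ∀ a ∈ A, G.degree a = k) :
    #(G.neighborFinsetOf A) = #A * k := by
  rw [neighborFinsetOf, card_biUnion hA, ← smul_eq_mul, ← sum_const]
  exact sum_congr rfl hdeg

namespace IsTwoThreeBiregular

variable {A : Finset V}

theorem neighborFinsetOf_subset (hG : G.IsTwoThreeBiregular) (hAL : A ⊆ G.verticesOfDegree 3) :
    G.neighborFinsetOf A ⊆ G.verticesOfDegree 2 := fun s hs => by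
  obtain ⟨a, haA, has⟩ := mem_neighborFinsetOf.1 hs
  exact mem_verticesOfDegree.2 (hG.degree_eq_two_of_adj has (mem_verticesOfDegree.1 (hAL haA)))

theorem eq_of_adj_of_notMem (hG : G.IsTwoThreeBiregular) (hAL : A ⊆ G.verticesOfDegree 3)
    {s l l' : V} (hs : s ∈ G.neighborFinsetOf A) (hl : G.Adj s l) (hl' : G.Adj s l')
    (hlA : l ∉ A) (hl'A : l' ∉ A) : l = l' := by
  obtain ⟨a, haA, has⟩ := mem_neighborFinsetOf.1 hs
  have hs2 := hG.degree_eq_two_of_adj has (mem_verticesOfDegree.1 (hAL haA))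
  exact eq_of_adj_of_degree_le_two hs2.le has.symm hl hl' (fun h => hlA (h ▸ haA))
    (fun h => hl'A (h ▸ haA))

theorem exists_adj_notMem (hG : G.IsTwoThreeBiregular) (hAL : A ⊆ G.verticesOfDegree 3)
    (hA : (A : Set V).PairwiseDisjoint (G.neighborFinset ·)) {s : V}
    (hs : s ∈ G.neighborFinsetOf A) : ∃ l ∈ G.verticesOfDegree 3 \ A, G.Adj s l := by
  obtain ⟨a, haA, has⟩ := mem_neighborFinsetOf.1 hs
  have hs2 := hG.degree_eq_two_of_adj has (mem_verticesOfDegree.1 (hAL haA))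
  obtain ⟨l, hl, hla⟩ := (G.neighborFinset s).exists_mem_ne (by simp [hs2]) a
  rw [mem_neighborFinset] at hl
  refine ⟨l, mem_sdiff.2 ⟨mem_verticesOfDegree.2 (hG.degree_eq_three_of_adj hl hs2), fun hlA => ?_⟩,
    hl⟩
  have hdisj : Disjoint (G.neighborFinset l) (G.neighborFinset a) := hA hlA haA hla
  exact Finset.disjoint_left.1 hdisj (by simpa using hl.symm) (by simpa using has)

theorem pairwiseDisjoint_neighborFinset_inter (hG : G.IsTwoThreeBiregular)
    (hAL : A ⊆ G.verticesOfDegree 3) :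
    ((G.verticesOfDegree 3 \ A : Finset V) : Set V).PairwiseDisjoint
      (fun l => G.neighborFinset l ∩ G.neighborFinsetOf A) := by
  intro l hl l' hl' hne
  refine Finset.disjoint_left.2 fun s hs hs' => hne ?_
  simp only [coe_sdiff, Set.mem_sdiff, mem_coe, mem_inter, mem_neighborFinset] at hl hl' hs hs'
  exact hG.eq_of_adj_of_notMem hAL hs.2 hs.1.symm hs'.1.symm hl.2 hl'.2

theorem sum_card_neighborFinset_inter (hG : G.IsTwoThreeBiregular)
    (hAL : A ⊆ G.verticesOfDegree 3) (hA : (A : Set V).PairwiseDisjoint (G.neighborFinset ·)) :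
    ∑ l ∈ G.verticesOfDegree 3 \ A, #(G.neighborFinset l ∩ G.neighborFinsetOf A) = #A * 3 := by
  have hcover : (G.verticesOfDegree 3 \ A).biUnion
      (fun l => G.neighborFinset l ∩ G.neighborFinsetOf A) = G.neighborFinsetOf A := by
    refine (biUnion_subset.2 fun l _ => inter_subset_right).antisymm fun s hs => ?_
    obtain ⟨l, hl, hsl⟩ := hG.exists_adj_notMem hAL hA hs
    exact mem_biUnion.2 ⟨l, hl, mem_inter.2 ⟨by simpa using hsl.symm, hs⟩⟩
  rw [← card_biUnion (hG.pairwiseDisjoint_neighborFinset_inter hAL), hcover,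
    card_neighborFinsetOf hA fun a ha => mem_verticesOfDegree.1 (hAL ha)]

variable {F : V → Finset V}

theorem neighborFinset_inter_biUnion_subset (hG : G.IsTwoThreeBiregular)
    (hAL : A ⊆ G.verticesOfDegree 3)
    (hFC : ∀ l ∈ G.verticesOfDegree 3 \ A, F l ⊆ G.neighborFinset l ∩ G.neighborFinsetOf A)
    {l : V} (hlA : l ∉ A) :
    G.neighborFinset l ∩ (G.verticesOfDegree 3 \ A).biUnion F ⊆ F l := by
  intro s hs
  obtain ⟨hls, hsE⟩ := mem_inter.1 hs
  obtain ⟨l', hl', hsl'⟩ := mem_biUnion.1 hsE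
  obtain ⟨hl's, hsA⟩ := mem_inter.1 (hFC l' hl' hsl')
  rw [mem_neighborFinset] at hls hl's
  rwa [hG.eq_of_adj_of_notMem hAL hsA hls.symm hl's.symm hlA (mem_sdiff.1 hl').2]

theorem biUnion_subset_verticesOfDegree_two (hG : G.IsTwoThreeBiregular)
    (hAL : A ⊆ G.verticesOfDegree 3)
    (hFC : ∀ l ∈ G.verticesOfDegree 3 \ A, F l ⊆ G.neighborFinset l ∩ G.neighborFinsetOf A) :
    (G.verticesOfDegree 3 \ A).biUnion F ⊆ G.verticesOfDegree 2 :=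
  biUnion_subset.2 fun l hl =>
    ((hFC l hl).trans inter_subset_right).trans (hG.neighborFinsetOf_subset hAL)

theorem exists_adj_mem_sdiff_biUnion (hG : G.IsTwoThreeBiregular)
    (hAL : A ⊆ G.verticesOfDegree 3)
    (hFC : ∀ l ∈ G.verticesOfDegree 3 \ A, F l ⊆ G.neighborFinset l ∩ G.neighborFinsetOf A)
    {l : V} (hl : l ∈ G.verticesOfDegree 3 \ A) (hF2 : #(F l) ≤ 2) :
    ∃ t ∈ G.verticesOfDegree 2 \ (G.verticesOfDegree 3 \ A).biUnion F, G.Adj l t := by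
  have h3 := mem_verticesOfDegree.1 (mem_sdiff.1 hl).1
  obtain ⟨t, hlt, htE⟩ :
      ∃ t ∈ G.neighborFinset l, t ∉ (G.verticesOfDegree 3 \ A).biUnion F := by
    by_contra! h
    have := card_le_card ((subset_inter Subset.rfl h).trans
      (hG.neighborFinset_inter_biUnion_subset hAL hFC (mem_sdiff.1 hl).2))
    rw [card_neighborFinset_eq_degree] at this
    omega
  rw [mem_neighborFinset] at hlt
  exact ⟨t, mem_sdiff.2 ⟨mem_verticesOfDegree.2 (hG.degree_eq_two_of_adj hlt h3), htE⟩, hlt⟩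

theorem isRestrainedDomSet_union_sdiff_biUnion (hG : G.IsTwoThreeBiregular)
    (hAL : A ⊆ G.verticesOfDegree 3)
    (hFC : ∀ l ∈ G.verticesOfDegree 3 \ A, F l ⊆ G.neighborFinset l ∩ G.neighborFinsetOf A)
    (hF : ∀ l ∈ G.verticesOfDegree 3 \ A, (F l).Nonempty ∧ #(F l) ≤ 2) :
    IsRestrainedDomSet G
      ↑(A ∪ (G.verticesOfDegree 2 \ (G.verticesOfDegree 3 \ A).biUnion F)) := by
  refine isRestrainedDomSet_union_sdiff ((disjoint_verticesOfDegree (by norm_num)).mono_left hAL)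
    (hG.biUnion_subset_verticesOfDegree_two hAL hFC) (fun s hs => ?_) fun l hlS hlA => ?_
  · obtain ⟨l, hl, hsl⟩ := mem_biUnion.1 hs
    obtain ⟨hls, hsA⟩ := mem_inter.1 (hFC l hl hsl)
    obtain ⟨a, haA, has⟩ := mem_neighborFinsetOf.1 hsA
    rw [mem_neighborFinset] at hls
    exact ⟨⟨a, haA, has.symm⟩, l, Finset.disjoint_left.1
      (disjoint_verticesOfDegree (by norm_num)) (mem_sdiff.1 hl).1, (mem_sdiff.1 hl).2, hls.symm⟩
  have hl : l ∈ G.verticesOfDegree 3 \ A := by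
    rw [mem_verticesOfDegree] at hlS
    exact mem_sdiff.2
      ⟨mem_verticesOfDegree.2 ((hG.degree_eq_two_or_three l).resolve_left hlS), hlA⟩
  obtain ⟨⟨s, hs⟩, hF2⟩ := hF l hl
  have hls : G.Adj l s := (mem_neighborFinset _ _ _).1 (mem_inter.1 (hFC l hl hs)).1
  exact ⟨⟨s, mem_biUnion.2 ⟨l, hl, hs⟩, hls⟩, hG.exists_adj_mem_sdiff_biUnion hAL hFC hl hF2⟩

theorem card_union_sdiff_biUnion_le (hG : G.IsTwoThreeBiregular)
    (hAL : A ⊆ G.verticesOfDegree 3) (hA : (A : Set V).PairwiseDisjoint (G.neighborFinset ·))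
    (hFC : ∀ l ∈ G.verticesOfDegree 3 \ A, F l ⊆ G.neighborFinset l ∩ G.neighborFinsetOf A)
    (hF : ∀ l ∈ G.verticesOfDegree 3 \ A,
      #(G.neighborFinset l ∩ G.neighborFinsetOf A) < 2 * #(F l)) :
    #(A ∪ (G.verticesOfDegree 2 \ (G.verticesOfDegree 3 \ A).biUnion F)) ≤
      #(G.verticesOfDegree 3) := by
  have hE : #A * 3 + #(G.verticesOfDegree 3 \ A) ≤
      2 * #((G.verticesOfDegree 3 \ A).biUnion F) := by
    rw [card_biUnion ((hG.pairwiseDisjoint_neighborFinset_inter hAL).mono_on hFC), mul_sum,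
      ← hG.sum_card_neighborFinset_inter hAL hA, card_eq_sum_ones, ← sum_add_distrib]
    exact sum_le_sum hF
  have hES := hG.biUnion_subset_verticesOfDegree_two hAL hFC
  have := card_le_card hES
  have := card_le_card hAL
  have := hG.card_verticesOfDegree_mul_eq
  rw [card_sdiff_of_subset hAL] at hE
  calc _ ≤ #A + #(G.verticesOfDegree 2 \ (G.verticesOfDegree 3 \ A).biUnion F) :=
        card_union_le _ _
    _ ≤ #(G.verticesOfDegree 3) := by
        rw [card_sdiff_of_subset hES]
        omega

theorem exists_isRestrainedDomSet_card_le (hG : G.IsTwoThreeBiregular) :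
    ∃ D : Finset V, IsRestrainedDomSet G ↑D ∧ #D ≤ #(G.verticesOfDegree 3) := by
  obtain ⟨A, hAL, hA, hmax⟩ :=
    (G.verticesOfDegree 3).exists_maximal_pairwiseDisjoint (G.neighborFinset ·)
  have hC : ∀ l ∈ G.verticesOfDegree 3 \ A,
      (G.neighborFinset l ∩ G.neighborFinsetOf A).Nonempty ∧
      #(G.neighborFinset l ∩ G.neighborFinsetOf A) ≤ 3 := by
    intro l hl
    obtain ⟨hlL, hlA⟩ := mem_sdiff.1 hl
    obtain ⟨a, haA, hla⟩ := hmax l hlL hlA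
    obtain ⟨s, hsl, hsa⟩ := not_disjoint_iff.1 hla
    refine ⟨⟨s, mem_inter.2 ⟨hsl, mem_neighborFinsetOf.2 ⟨a, haA, ?_⟩⟩⟩,
      (card_le_card inter_subset_left).trans (mem_verticesOfDegree.1 hlL).le⟩
    simpa using hsa
  choose! F hFC hF2 hF using fun l hl =>
    exists_subset_card_le_two_lt_two_mul_card (hC l hl).1 (hC l hl).2
  refine ⟨_, hG.isRestrainedDomSet_union_sdiff_biUnion hAL hFC fun l hl => ⟨?_, hF2 l hl⟩,
    hG.card_union_sdiff_biUnion_le hAL hA hFC hF⟩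
  have := hF l hl
  exact card_pos.1 (by omega)

end IsTwoThreeBiregular

end Finite

end SimpleGraph

/-- If every vertex of `G` has degree `2` or `3` and every edge joins a vertex
of degree `2` to a vertex of degree `3`, then `γ_r(G)` is at most the number of
degree-3 vertices of `G`. -/
theorem restrainedDominationNumber_le_card_degreeThree
    {V : Type*} [Fintype V] (G : SimpleGraph V)
    (hdeg : ∀ v : V, (G.neighborSet v).ncard = 2 ∨ (G.neighborSet v).ncard = 3)
    (hbip : ∀ u v : V, G.Adj u v →
      ((G.neighborSet u).ncard = 2 ∧ (G.neighborSet v).ncard = 3) ∨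
      ((G.neighborSet u).ncard = 3 ∧ (G.neighborSet v).ncard = 2)) :
    restrainedDominationNumber G ≤ {v : V | (G.neighborSet v).ncard = 3}.ncard := by
  classical
  simp only [SimpleGraph.ncard_neighborSet_eq_degree] at hdeg hbip ⊢
  have hG : G.IsTwoThreeBiregular := ⟨hdeg, fun u v huv => by have := hbip u v huv; omega⟩
  obtain ⟨D, hD, hcard⟩ := hG.exists_isRestrainedDomSet_card_le
  calc restrainedDominationNumber G ≤ (D : Set V).ncard := restrainedDominationNumber_le_ncard_s3 hD
    _ = #D := Set.ncard_coe_finset D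
    _ ≤ #(G.verticesOfDegree 3) := hcard
    _ = {v | G.degree v = 3}.ncard := by
      rw [← SimpleGraph.coe_verticesOfDegree, Set.ncard_coe_finset]
end
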